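/- Combining the previous facts: for each π ∈ [0,1)^M, each row-stochastic M×M matrix P (M ≥ 2) and each nonnegative μ ∈ ℝ^M, there exist a row-stochastic matrix P̂ and a nonnegative vector μ̂ ∈ ℝ^M such that P̂_{k,k} = π_k for every k, P̂_{k,i}·μ̂_k = P_{k,i}·μ_k for all i ≠ k, and (P̂_{k,k} - 1)·μ̂_k = (P_{k,k} - 1)·μ_k for every k. -/

import Mathlib

/-!
Rescaling the service rate of a station by `(1 - P k k) / (1 - π k)` and spreading the exit
mass `1 - π k` over the other stations in proportion to the original exit probabilities keeps
every outgoing flow `P k i * μ k` (`i ≠ k`) and the net outflow `(P k k - 1) * μ k` unchanged.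
When `P k k = 1` there is nothing to preserve, and the exit mass may go to any other station.
-/

open Finset

variable {ι : Type*} [Fintype ι]

theorem eq_zero_of_mem_stdSimplex_of_apply_eq_one {p : ι → ℝ} (hp : p ∈ stdSimplex ℝ ι) {k : ι}
    (hk : p k = 1) {i : ι} (hik : i ≠ k) : p i = 0 := by
  have := add_le_sum (fun j _ ↦ hp.1 j) (mem_univ i) (mem_univ k) hik
  linarith [hp.1 i, hp.2]

theorem exists_exitDistribution [DecidableEq ι] [Nontrivial ι] {p : ι → ℝ}
    (hp : p ∈ stdSimplex ℝ ι) (k : ι) :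
    ∃ r ∈ stdSimplex ℝ ι, r k = 0 ∧ ∀ i ≠ k, (1 - p k) * r i = p i := by
  rcases (mem_Icc_of_mem_stdSimplex hp k).2.eq_or_lt with hk | hk
  · obtain ⟨j, hjk⟩ := exists_ne k
    refine ⟨Pi.single j 1, single_mem_stdSimplex ℝ j, Pi.single_eq_of_ne' hjk 1, fun i hik ↦ ?_⟩
    rw [hk, eq_zero_of_mem_stdSimplex_of_apply_eq_one hp hk hik, sub_self, zero_mul]
  · have hk' : 1 - p k ≠ 0 := (sub_pos.2 hk).ne'
    refine ⟨(1 - p k)⁻¹ • (p - Pi.single k (p k)), ⟨fun i ↦ ?_, ?_⟩, by simp, fun i hik ↦ ?_⟩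
    · rcases eq_or_ne i k with rfl | hik
      · simp
      · simpa [hik] using mul_nonneg (inv_nonneg.2 (sub_pos.2 hk).le) (hp.1 i)
    · simp only [Pi.smul_apply, Pi.sub_apply, smul_eq_mul, ← mul_sum, sum_sub_distrib,
        sum_pi_single', mem_univ, if_true, hp.2]
      exact inv_mul_cancel₀ hk'
    · simp [hik, hk']

theorem exists_mem_stdSimplex_apply_eq_mul_eq [DecidableEq ι] [Nontrivial ι] {p : ι → ℝ}
    (hp : p ∈ stdSimplex ℝ ι) {m : ℝ} (hm : 0 ≤ m) (k : ι) {π : ℝ} (hπ₀ : 0 ≤ π) (hπ₁ : π < 1) :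
    ∃ q ∈ stdSimplex ℝ ι, ∃ n, 0 ≤ n ∧ q k = π ∧ (∀ i ≠ k, q i * n = p i * m) ∧
      (q k - 1) * n = (p k - 1) * m := by
  obtain ⟨r, hr, hrk, hrp⟩ := exists_exitDistribution hp k
  have hπ : 1 - π ≠ 0 := (sub_pos.2 hπ₁).ne'
  have hqk : (π • Pi.single k 1 + (1 - π) • r : ι → ℝ) k = π := by simp [hrk]
  refine ⟨π • Pi.single k 1 + (1 - π) • r,
    convex_stdSimplex ℝ ι (single_mem_stdSimplex ℝ k) hr hπ₀ (sub_pos.2 hπ₁).le (by ring),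
    m * (1 - p k) / (1 - π),
    div_nonneg (mul_nonneg hm (sub_nonneg.2 (mem_Icc_of_mem_stdSimplex hp k).2))
      (sub_pos.2 hπ₁).le,
    hqk, fun i hik ↦ ?_, ?_⟩
  · rw [← hrp i hik]
    simp only [Pi.add_apply, Pi.smul_apply, Pi.single_eq_of_ne hik, smul_eq_mul]
    field_simp
    ring
  · rw [hqk]
    field_simp
    ring

/-- Theorem 1 of the paper: non-identifiability of self-loops. -/
theorem stmt_4 (M : ℕ) (hM : 2 ≤ M)
    (P : Fin M → Fin M → ℝ)
    (hPnn : ∀ k i, 0 ≤ P k i) (hProw : ∀ k, ∑ i, P k i = 1)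
    (μ : Fin M → ℝ) (hμ : ∀ k, 0 ≤ μ k)
    (π : Fin M → ℝ) (hπ : ∀ k, 0 ≤ π k ∧ π k < 1) :
    ∃ (Phat : Fin M → Fin M → ℝ) (μhat : Fin M → ℝ),
      (∀ k i, 0 ≤ Phat k i) ∧ (∀ k, ∑ i, Phat k i = 1) ∧
      (∀ k, 0 ≤ μhat k) ∧
      (∀ k, Phat k k = π k) ∧
      (∀ k i, i ≠ k → Phat k i * μhat k = P k i * μ k) ∧
      (∀ k, (Phat k k - 1) * μhat k = (P k k - 1) * μ k) := by
  have : Nontrivial (Fin M) := Fin.nontrivial_iff_two_le.2 hM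
  choose Phat hPhat μhat hμhat hdiag hoff hnet using fun k ↦
    exists_mem_stdSimplex_apply_eq_mul_eq ⟨hPnn k, hProw k⟩ (hμ k) k (hπ k).1 (hπ k).2
  exact ⟨Phat, μhat, fun k ↦ (hPhat k).1, fun k ↦ (hPhat k).2, hμhat, hdiag,
    fun k i ↦ hoff k i, hnet⟩
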